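/- Let G be a finite simple graph and x a vertex of G belonging to some triangle T = {x, x2, x3} where both x2 and x3 have degree 2 in G, and suppose G arises from a connected bipartite graph H with parts X ∪ Y by attaching at least one pendant edge to each vertex of X and pendant triangles to vertices of Y (a non-star, non-star-triangle connected Cameron-Walker graph). Then the induced matching number of G minus x equals the induced matching number of G: indmatch(G \ x) = indmatch(G), where x is the vertex of the pendant triangle T with degree greater than 2. -/

import Mathlib

open MvPolynomial

namespace CW

variable {V : Type*}

/-- A vertex cover of a graph: a set of vertices meeting every edge. -/
def IsVertexCover (G : SimpleGraph V) (C : Set V) : Prop :=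
  ∀ ⦃v w : V⦄, G.Adj v w → v ∈ C ∨ w ∈ C

/-- A minimal vertex cover: no proper subset is a vertex cover. -/
def IsMinimalVertexCover (G : SimpleGraph V) (C : Set V) : Prop :=
  IsVertexCover G C ∧ ∀ D : Set V, D ⊂ C → ¬ IsVertexCover G D

/-- The edge ideal of a graph, in the polynomial ring over `K` with variables the vertices. -/
noncomputable def edgeIdeal (K : Type*) [Field K] (G : SimpleGraph V) : Ideal (MvPolynomial V K) :=
  Ideal.span {m | ∃ v w : V, G.Adj v w ∧ m = X v * X w}

/-- The monomial prime ideal generated by the variables in `C`. -/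
noncomputable def coverIdeal (K : Type*) [Field K] (C : Set V) : Ideal (MvPolynomial V K) :=
  Ideal.span ((fun v => (X v : MvPolynomial V K)) '' C)

/-- The `s`-th symbolic power of the edge ideal:
the intersection of the `s`-th powers of the minimal-vertex-cover primes. -/
noncomputable def symbolicPower (K : Type*) [Field K] (G : SimpleGraph V) (s : ℕ) :
    Ideal (MvPolynomial V K) :=
  ⨅ C ∈ {C : Set V | IsMinimalVertexCover G C}, (coverIdeal K C) ^ s

/-- A matching: a set of edges of `G`, pairwise sharing no vertex. -/
def IsMatching (G : SimpleGraph V) (M : Finset (Sym2 V)) : Prop :=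
  (∀ e ∈ M, e ∈ G.edgeSet) ∧
    ∀ e ∈ M, ∀ f ∈ M, e ≠ f → ∀ v : V, v ∈ e → v ∉ f

/-- An induced matching: a matching such that no edge of `G` outside it is contained
in the union of two of its edges. -/
def IsInducedMatching (G : SimpleGraph V) (M : Finset (Sym2 V)) : Prop :=
  IsMatching G M ∧
    ∀ f ∈ G.edgeSet, f ∉ M → ∀ e₁ ∈ M, ∀ e₂ ∈ M,
      ¬ (∀ v : V, v ∈ f → v ∈ e₁ ∨ v ∈ e₂)

/-- The matching number: the maximum size of a matching. -/
noncomputable def matchNum (G : SimpleGraph V) : ℕ :=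
  sSup {k : ℕ | ∃ M : Finset (Sym2 V), IsMatching G M ∧ M.card = k}

/-- The induced matching number: the maximum size of an induced matching. -/
noncomputable def indMatchNum (G : SimpleGraph V) : ℕ :=
  sSup {k : ℕ | ∃ M : Finset (Sym2 V), IsInducedMatching G M ∧ M.card = k}

/-- A Cameron–Walker graph: the matching number equals the induced matching number. -/
def IsCameronWalker (G : SimpleGraph V) : Prop :=
  matchNum G = indMatchNum G

/-- The graph obtained by deleting the vertices in `U`: it keeps the vertex set but
only the edges avoiding `U` (isolated vertices are irrelevant for all notions used). -/
def deleteVerts (G : SimpleGraph V) (U : Set V) : SimpleGraph V where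
  Adj v w := G.Adj v w ∧ v ∉ U ∧ w ∉ U
  symm := ⟨fun _ _ h => ⟨h.1.symm, h.2.2, h.2.1⟩⟩
  loopless := ⟨fun u h => G.loopless.irrefl u h.1⟩

end CW

/-!
Deleting `x` can only destroy induced matchings that use an edge `e` at `x`. The only
neighbours of `x2` and `x3` are `x` and each other, so every edge meeting `x2x3` meets `e`;
trading `e` for `x2x3` therefore keeps the matching induced, keeps its size, and avoids `x`.
-/

theorem SimpleGraph.eq_or_eq_of_adj_of_degree_eq_two {V : Type*} {G : SimpleGraph V}
    [Fintype V] [DecidableRel G.Adj] {a b c w : V} (hab : G.Adj a b) (hac : G.Adj a c)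
    (hbc : b ≠ c) (hdeg : G.degree a = 2) (haw : G.Adj a w) : w = b ∨ w = c := by
  classical
  have hN : {b, c} = G.neighborFinset a :=
    Finset.eq_of_subset_of_card_le (by simp [Finset.insert_subset_iff, hab, hac])
      (by rw [G.card_neighborFinset_eq_degree, hdeg, Finset.card_pair hbc])
  simpa [← hN] using (G.mem_neighborFinset a w).2 haw

theorem SimpleGraph.exists_adj_eq_of_mem_edgeSet {V : Type*} {G : SimpleGraph V} {h : Sym2 V}
    (hh : h ∈ G.edgeSet) {v : V} (hv : v ∈ h) : ∃ w, G.Adj v w ∧ h = s(v, w) := by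
  obtain ⟨w, rfl⟩ := Sym2.mem_iff_exists.1 hv
  exact ⟨w, hh, rfl⟩

namespace CW

variable {V : Type*} {G : SimpleGraph V} {M : Finset (Sym2 V)}

theorem mem_edgeSet_deleteVerts {U : Set V} {e : Sym2 V} :
    e ∈ (deleteVerts G U).edgeSet ↔ e ∈ G.edgeSet ∧ ∀ v ∈ e, v ∉ U := by
  induction e using Sym2.ind with
  | h a b => simp [deleteVerts]

theorem isInducedMatching_iff :
    IsInducedMatching G M ↔
      IsMatching G M ∧ ∀ f ∈ G.edgeSet, (∀ v ∈ f, ∃ e ∈ M, v ∈ e) → f ∈ M := by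
  refine ⟨fun ⟨hMat, hInd⟩ => ⟨hMat, fun f hf hcov => ?_⟩,
    fun ⟨hMat, hcl⟩ => ⟨hMat, ?_⟩⟩
  · by_contra hfM
    induction f using Sym2.ind with
    | h a b =>
      obtain ⟨e₁, he₁, ha⟩ := hcov a (Sym2.mem_mk_left a b)
      obtain ⟨e₂, he₂, hb⟩ := hcov b (Sym2.mem_mk_right a b)
      refine hInd _ hf hfM e₁ he₁ e₂ he₂ fun v hv => ?_
      rcases Sym2.mem_iff.1 hv with rfl | rfl
      exacts [Or.inl ha, Or.inr hb]
  · intro f hf hfM e₁ he₁ e₂ he₂ hcov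
    exact hfM <| hcl f hf fun v hv => (hcov v hv).elim (⟨e₁, he₁, ·⟩) (⟨e₂, he₂, ·⟩)

theorem le_indMatchNum [Finite V] (hM : IsInducedMatching G M) : M.card ≤ indMatchNum G := by
  have := Fintype.ofFinite V
  refine le_csSup ⟨Fintype.card (Sym2 V), ?_⟩ ⟨M, hM, rfl⟩
  rintro k ⟨M, -, rfl⟩
  exact Finset.card_le_univ M

theorem indMatchNum_le {k : ℕ} (h : ∀ M, IsInducedMatching G M → M.card ≤ k) :
    indMatchNum G ≤ k :=
  csSup_le' fun _ ⟨M, hM, hk⟩ => hk ▸ h M hM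

theorem IsInducedMatching.of_deleteVerts {U : Set V}
    (hM : IsInducedMatching (deleteVerts G U) M) : IsInducedMatching G M := by
  obtain ⟨⟨hE, hdisj⟩, hcl⟩ := isInducedMatching_iff.1 hM
  refine isInducedMatching_iff.2
    ⟨⟨fun e he => (mem_edgeSet_deleteVerts.1 (hE e he)).1, hdisj⟩, fun f hf hcov => ?_⟩
  refine hcl f (mem_edgeSet_deleteVerts.2 ⟨hf, fun v hv => ?_⟩) hcov
  obtain ⟨e, he, hve⟩ := hcov v hv
  exact (mem_edgeSet_deleteVerts.1 (hE e he)).2 v hve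

theorem IsInducedMatching.deleteVerts_of_forall_notMem {U : Set V}
    (hM : IsInducedMatching G M) (hU : ∀ e ∈ M, ∀ v ∈ e, v ∉ U) :
    IsInducedMatching (deleteVerts G U) M := by
  obtain ⟨⟨hE, hdisj⟩, hInd⟩ := hM
  exact ⟨⟨fun e he => mem_edgeSet_deleteVerts.2 ⟨hE e he, hU e he⟩, hdisj⟩,
    fun f hf => hInd f (mem_edgeSet_deleteVerts.1 hf).1⟩

section Exchange

variable [DecidableEq V] {e f : Sym2 V}

theorem IsMatching.mem_of_adj_of_mem_erase (hM : IsMatching G M) (he : e ∈ M)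
    (hnbr : ∀ v ∈ f, ∀ w, G.Adj v w → w ∈ f ∨ w ∈ e) {g : Sym2 V} (hg : g ∈ M.erase e)
    {v w : V} (hv : v ∈ f) (hw : w ∈ g) (hvw : G.Adj v w) : w ∈ f :=
  (hnbr v hv w hvw).resolve_right
    (hM.2 g (Finset.mem_of_mem_erase hg) e he (Finset.ne_of_mem_erase hg) w hw)

theorem IsMatching.insert_erase (hM : IsMatching G M) (he : e ∈ M) (hf : f ∈ G.edgeSet)
    (hfM : f ∉ M) (hnbr : ∀ v ∈ f, ∀ w, G.Adj v w → w ∈ f ∨ w ∈ e) :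
    IsMatching G (insert f (M.erase e)) := by
  have hdisj_f : ∀ g ∈ M.erase e, ∀ v ∈ f, v ∉ g := by
    intro g hg v hvf hvg
    obtain ⟨w, hvw, rfl⟩ := SimpleGraph.exists_adj_eq_of_mem_edgeSet
      (hM.1 g (Finset.mem_of_mem_erase hg)) hvg
    have hwf := hM.mem_of_adj_of_mem_erase he hnbr hg hvf (Sym2.mem_mk_right v w) hvw
    rw [← (Sym2.mem_and_mem_iff hvw.ne).1 ⟨hvf, hwf⟩] at hg
    exact hfM (Finset.mem_of_mem_erase hg)
  refine ⟨fun g hg => ?_, fun g₁ hg₁ g₂ hg₂ hne v hv₁ hv₂ => ?_⟩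
  · rcases Finset.mem_insert.1 hg with rfl | hg
    exacts [hf, hM.1 g (Finset.mem_of_mem_erase hg)]
  · rcases Finset.mem_insert.1 hg₁ with rfl | h₁ <;>
      rcases Finset.mem_insert.1 hg₂ with rfl | h₂
    · exact hne rfl
    · exact hdisj_f _ h₂ v hv₁ hv₂
    · exact hdisj_f _ h₁ v hv₂ hv₁
    · exact hM.2 _ (Finset.mem_of_mem_erase h₁) _ (Finset.mem_of_mem_erase h₂) hne v hv₁ hv₂

theorem IsInducedMatching.insert_erase (hM : IsInducedMatching G M) (he : e ∈ M)
    (hf : f ∈ G.edgeSet) (hfM : f ∉ M) (hnbr : ∀ v ∈ f, ∀ w, G.Adj v w → w ∈ f ∨ w ∈ e) :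
    IsInducedMatching G (insert f (M.erase e)) := by
  obtain ⟨hMat, hcl⟩ := isInducedMatching_iff.1 hM
  refine isInducedMatching_iff.2 ⟨hMat.insert_erase he hf hfM hnbr, fun h hh hcov => ?_⟩
  by_cases hhf : ∃ v ∈ h, v ∈ f
  · obtain ⟨v, hvh, hvf⟩ := hhf
    obtain ⟨w, hvw, rfl⟩ := SimpleGraph.exists_adj_eq_of_mem_edgeSet hh hvh
    obtain ⟨g, hg, hwg⟩ := hcov w (Sym2.mem_mk_right v w)
    have hwf : w ∈ f := by
      rcases Finset.mem_insert.1 hg with rfl | hg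
      exacts [hwg, hMat.mem_of_adj_of_mem_erase he hnbr hg hvf hwg hvw]
    rw [← (Sym2.mem_and_mem_iff hvw.ne).1 ⟨hvf, hwf⟩]
    exact Finset.mem_insert_self _ _
  push Not at hhf
  have hcov' : ∀ v ∈ h, ∃ g ∈ M.erase e, v ∈ g := fun v hv => by
    obtain ⟨g, hg, hvg⟩ := hcov v hv
    rcases Finset.mem_insert.1 hg with rfl | hg
    exacts [absurd hvg (hhf v hv), ⟨g, hg, hvg⟩]
  refine Finset.mem_insert_of_mem (Finset.mem_erase.2 ⟨?_, ?_⟩)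
  · rintro rfl
    obtain ⟨v, hv⟩ : ∃ v, v ∈ h := Sym2.ind (fun a b => ⟨a, Sym2.mem_mk_left a b⟩) h
    obtain ⟨g, hg, hvg⟩ := hcov' v hv
    exact hMat.2 g (Finset.mem_of_mem_erase hg) h he (Finset.ne_of_mem_erase hg) v hvg hv
  · exact hcl h hh fun v hv =>
      (hcov' v hv).imp fun g ⟨hg, hvg⟩ => ⟨Finset.mem_of_mem_erase hg, hvg⟩

end Exchange

theorem IsInducedMatching.exists_deleteVerts_singleton {x y z : V}
    (hxy : G.Adj x y) (hyz : G.Adj y z) (hxz : x ≠ z)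
    (hy : ∀ w, G.Adj y w → w = x ∨ w = z) (hz : ∀ w, G.Adj z w → w = x ∨ w = y)
    (hM : IsInducedMatching G M) :
    ∃ M', IsInducedMatching (deleteVerts G {x}) M' ∧ M'.card = M.card := by
  classical
  by_cases hx : ∃ e ∈ M, x ∈ e
  swap
  · push Not at hx
    exact ⟨M, hM.deleteVerts_of_forall_notMem fun e he v hv hvx => hx e he (hvx ▸ hv), rfl⟩
  obtain ⟨e, he, hxe⟩ := hx
  have hdisj := hM.1.2
  have hyz_notMem : s(y, z) ∉ M := by
    intro hf
    have hxyM : s(x, y) ∈ M := (isInducedMatching_iff.1 hM).2 _ hxy fun v hv => by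
      rcases Sym2.mem_iff.1 hv with rfl | rfl
      exacts [⟨e, he, hxe⟩, ⟨_, hf, Sym2.mem_mk_left _ _⟩]
    exact hdisj _ hxyM _ hf (by simp [hxz, hxy.ne]) y (Sym2.mem_mk_right x y)
      (Sym2.mem_mk_left y z)
  have hnbr : ∀ v ∈ s(y, z), ∀ w, G.Adj v w → w ∈ s(y, z) ∨ w ∈ e := by
    intro v hv w hvw
    rcases Sym2.mem_iff.1 hv with rfl | rfl
    · rcases hy w hvw with rfl | rfl <;> simp [hxe]
    · rcases hz w hvw with rfl | rfl <;> simp [hxe]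
  refine ⟨insert s(y, z) (M.erase e),
    (hM.insert_erase he hyz hyz_notMem hnbr).deleteVerts_of_forall_notMem ?_, ?_⟩
  · rintro g hg v hvg rfl
    rcases Finset.mem_insert.1 hg with rfl | hg
    · rcases Sym2.mem_iff.1 hvg with h | h
      exacts [hxy.ne h, hxz h]
    · exact hdisj g (Finset.mem_of_mem_erase hg) e he (Finset.ne_of_mem_erase hg) _ hvg hxe
  · rw [Finset.card_insert_of_notMem fun h => hyz_notMem (Finset.mem_of_mem_erase h),
      Finset.card_erase_add_one he]

end CW

theorem stmt_8_general {V : Type*} [Fintype V] (G : SimpleGraph V)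
    [DecidableRel G.Adj]
    (x x2 x3 : V)
    (hT12 : G.Adj x x2) (hT13 : G.Adj x x3) (hT23 : G.Adj x2 x3)
    (hd2 : G.degree x2 = 2) (hd3 : G.degree x3 = 2) :
    CW.indMatchNum (CW.deleteVerts G {x}) = CW.indMatchNum G := by
  have hnbr2 : ∀ w, G.Adj x2 w → w = x ∨ w = x3 := fun _ =>
    G.eq_or_eq_of_adj_of_degree_eq_two hT12.symm hT23 hT13.ne hd2
  have hnbr3 : ∀ w, G.Adj x3 w → w = x ∨ w = x2 := fun _ =>
    G.eq_or_eq_of_adj_of_degree_eq_two hT13.symm hT23.symm hT12.ne hd3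
  refine le_antisymm (CW.indMatchNum_le fun M hM => CW.le_indMatchNum hM.of_deleteVerts)
    (CW.indMatchNum_le fun M hM => ?_)
  obtain ⟨M', hM', hcard⟩ := hM.exists_deleteVerts_singleton hT12 hT23 hT13.ne hnbr2 hnbr3
  exact hcard ▸ CW.le_indMatchNum hM'

/-- Let `G` be a connected graph obtained from a connected bipartite graph `H` on parts
`X ∪ Y` by attaching at least one pendant edge to each vertex of `X` and pendant
triangles to vertices of `Y` (a non-star, non-star-triangle connected Cameron–Walker
graph), and let `x` be the vertex of degree `> 2` of a pendant triangle
`T = {x, x2, x3}` (so `deg(x2) = deg(x3) = 2`). Then `indmatch(G \ x) = indmatch(G)`. -/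
theorem stmt_8 {V : Type*} [Fintype V] [DecidableEq V] (G : SimpleGraph V)
    [DecidableRel G.Adj] (hconn : G.Connected)
    (x x2 x3 : V)
    (hT12 : G.Adj x x2) (hT13 : G.Adj x x3) (hT23 : G.Adj x2 x3)
    (hd2 : G.degree x2 = 2) (hd3 : G.degree x3 = 2) (hdx : 2 < G.degree x)
    (X Y : Set V) (hdisj : X ∩ Y = ∅)
    (hXX : ∀ v ∈ X, ∀ w ∈ X, ¬ G.Adj v w)
    (hYY : ∀ v ∈ Y, ∀ w ∈ Y, ¬ G.Adj v w)
    (hHconn : (G.induce (X ∪ Y)).Connected)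
    (hpend : ∀ v ∈ X, ∃ u : V, G.Adj v u ∧ G.degree u = 1)
    (hout : ∀ u : V, u ∉ X ∪ Y →
      (G.degree u = 1 ∧ ∃ v ∈ X, G.Adj u v) ∨
        (G.degree u = 2 ∧ ∃ w : V, w ∉ X ∪ Y ∧ G.degree w = 2 ∧
          ∃ y ∈ Y, G.Adj u w ∧ G.Adj u y ∧ G.Adj w y)) :
    CW.indMatchNum (CW.deleteVerts G {x}) = CW.indMatchNum G :=
  stmt_8_general G x x2 x3 hT12 hT13 hT23 hd2 hd3
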